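/- arXiv:1412.0187 — 2 statements merged into one kernel-verified Lean document; each statement's English description precedes it below -/
import Mathlib

section
/- Let G be a finite simple graph and T a spanning tree of G. Suppose a 1-chain i on G decomposes as i = z + t, where z is a circulation on G (a sum of mesh currents, i.e. of boundaries of faces) and t is a 1-chain supported on T (the node-pair currents). If i itself is a circulation, i.e. i satisfies Kirchhoff's current law (zero divergence) at every vertex, then t = 0, so i = z. -/
/-!
The node-pair current `t = i - z` is divergence-free, antisymmetric and carried by the
acyclic graph `T`. Every edge `xy` of a forest is a bridge; summing the divergence of `t`
over the side `S` of `x` in `T - xy` gives the net flux of `t` out of `S`, which is `0`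
by antisymmetry, while the only edge of `T` leaving `S` is `xy`, so that flux is `t x y`.
-/

open Finset

/-- A 1-chain on a simple graph `G`: antisymmetric and vanishing on non-adjacent pairs. -/
def IsOneChain {V : Type*} (G : SimpleGraph V) (f : V → V → ℝ) : Prop :=
  (∀ x y, f x y = -(f y x)) ∧ (∀ x y, ¬ G.Adj x y → f x y = 0)

/-- A circulation: a 1-chain with zero divergence at every vertex. -/
def IsCirculation {V : Type*} [Fintype V] (G : SimpleGraph V) (f : V → V → ℝ) : Prop :=
  IsOneChain G f ∧ ∀ x, ∑ y, f x y = 0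

/-- `T` is a spanning tree of `G`: a subgraph on the same vertex set,
connected and without cycles. -/
def IsSpanningTree {V : Type*} (G T : SimpleGraph V) : Prop :=
  T ≤ G ∧ T.Connected ∧ T.IsAcyclic

/-- A 1-chain is supported on `T` if it vanishes whenever `{x, y}` is not an edge of `T`. -/
def SupportedOn {V : Type*} (T : SimpleGraph V) (f : V → V → ℝ) : Prop :=
  ∀ x y, ¬ T.Adj x y → f x y = 0

open SimpleGraph

section Flux

variable {V : Type*} {f : V → V → ℝ}

lemma sum_sum_eq_zero_of_antisymm (hf : ∀ x y, f x y = -f y x) (S : Finset V) :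
    ∑ v ∈ S, ∑ w ∈ S, f v w = 0 := by
  have h : ∑ v ∈ S, ∑ w ∈ S, f v w = -∑ w ∈ S, ∑ v ∈ S, f w v := by
    conv_lhs => rw [sum_comm]
    rw [← sum_neg_distrib]
    exact sum_congr rfl fun w _ => by rw [← sum_neg_distrib]; exact sum_congr rfl fun v _ => hf v w
  linarith

variable [Fintype V] [DecidableEq V]

lemma sum_sum_compl_eq_zero_of_antisymm (hf : ∀ x y, f x y = -f y x)
    (hdiv : ∀ x, ∑ y, f x y = 0) (S : Finset V) :
    ∑ v ∈ S, ∑ w ∈ Sᶜ, f v w = 0 := by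
  have hsplit : ∀ v, ∑ w ∈ Sᶜ, f v w = -∑ w ∈ S, f v w := fun v => by
    linarith [sum_add_sum_compl S (f v), hdiv v]
  simp only [hsplit, sum_neg_distrib, sum_sum_eq_zero_of_antisymm hf, neg_zero]

lemma sum_sum_compl_eq_apply {S : Finset V} {x y : V} (hx : x ∈ S) (hy : y ∉ S)
    (hf : ∀ v ∈ S, ∀ w ∉ S, (v, w) ≠ (x, y) → f v w = 0) :
    ∑ v ∈ S, ∑ w ∈ Sᶜ, f v w = f x y := by
  rw [← sum_product' S Sᶜ f, sum_eq_single (x, y)]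
  · rintro ⟨v, w⟩ hvw hne
    rw [mem_product, mem_compl] at hvw
    exact hf v hvw.1 w hvw.2 hne
  · exact fun h => (h (mem_product.2 ⟨hx, mem_compl.2 hy⟩)).elim

end Flux

lemma SimpleGraph.IsBridge.eq_of_adj_of_reachable {V : Type*} {G : SimpleGraph V}
    {x y v w : V} (hb : G.IsBridge s(x, y)) (hvw : G.Adj v w)
    (hv : (G.deleteEdges {s(x, y)}).Reachable x v)
    (hw : ¬ (G.deleteEdges {s(x, y)}).Reachable x w) : v = x ∧ w = y := by
  by_cases he : s(v, w) = s(x, y)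
  · rcases Sym2.eq_iff.mp he with h | ⟨rfl, rfl⟩
    · exact h
    · exact (isBridge_iff.mp hb hv).elim
  · exact (hw (hv.trans (deleteEdges_adj.mpr ⟨hvw, he⟩).reachable)).elim

theorem SimpleGraph.IsAcyclic.eq_zero_of_supportedOn {V : Type*} [Fintype V]
    {T : SimpleGraph V} (hT : T.IsAcyclic) {f : V → V → ℝ} (hf : ∀ x y, f x y = -f y x)
    (hsupp : SupportedOn T f) (hdiv : ∀ x, ∑ y, f x y = 0) : f = 0 := by
  classical
  funext x y
  rw [Pi.zero_apply, Pi.zero_apply]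
  by_cases hxy : T.Adj x y
  swap
  · exact hsupp x y hxy
  have hb := isAcyclic_iff_forall_adj_isBridge.mp hT hxy
  let S : Finset V := {v | (T.deleteEdges {s(x, y)}).Reachable x v}
  have hxS : x ∈ S := by simp [S]
  have hyS : y ∉ S := by simpa [S] using isBridge_iff.mp hb
  rw [← sum_sum_compl_eq_apply (f := f) hxS hyS, sum_sum_compl_eq_zero_of_antisymm hf hdiv]
  intro v hv w hw hne
  by_cases hvw : T.Adj v w
  swap
  · exact hsupp v w hvw
  obtain ⟨rfl, rfl⟩ :=
    hb.eq_of_adj_of_reachable hvw (by simpa [S] using hv) (by simpa [S] using hw)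
  exact (hne rfl).elim

theorem node_pair_currents_vanish_of_kirchhoff_general
    {V : Type*} [Fintype V] (G T : SimpleGraph V)
    (hT : IsSpanningTree G T)
    (i z t : V → V → ℝ)
    (hz : IsCirculation G z)
    (ht : IsOneChain G t) (htsupp : SupportedOn T t)
    (hdecomp : i = z + t)
    (hKirchhoff : ∀ x, ∑ y, i x y = 0) :
    t = 0 ∧ i = z := by
  have hdiv : ∀ x, ∑ y, t x y = 0 := fun x => by
    simpa only [hdecomp, Pi.add_apply, sum_add_distrib, hz.2 x, zero_add] using hKirchhoff x
  have ht0 : t = 0 := hT.2.2.eq_zero_of_supportedOn ht.1 htsupp hdiv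
  exact ⟨ht0, by rw [hdecomp, ht0, add_zero]⟩

theorem node_pair_currents_vanish_of_kirchhoff
    {V : Type*} [Fintype V] (G T : SimpleGraph V)
    (hT : IsSpanningTree G T)
    (i z t : V → V → ℝ)
    (hi : IsOneChain G i)
    (hz : IsCirculation G z)
    (ht : IsOneChain G t) (htsupp : SupportedOn T t)
    (hdecomp : i = z + t)
    (hKirchhoff : ∀ x, ∑ y, i x y = 0) :
    t = 0 ∧ i = z :=
  node_pair_currents_vanish_of_kirchhoff_general G T hT i z t hz ht htsupp hdecomp hKirchhoff
end

section
/- Let G be a finite simple graph with B edges, N vertices, and R connected components. The circulations on G form a real vector subspace of the space of 1-chains whose dimension equals M = B - N + R (the number of independent meshes). -/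
/-!
Orient every edge of `G` from its smaller to its larger endpoint for some linear order on `V`.
A 1-chain is then the same as a function on oriented edges, and its divergence is computed by
the oriented incidence matrix `D`, so the circulations form a space of dimension `B - rank D`.
Since `D Dᵀ` is the graph Laplacian and `rank (D Dᵀ) = rank D` over `ℝ`, we get
`rank D = N - R`, because the kernel of the Laplacian is spanned by the indicator functions of
the connected components.
-/

open Finset

/-- The circulations on `G` (antisymmetric functions vanishing on non-adjacent pairs and
with zero divergence at every vertex) form a real vector subspace of the space of
1-chains `V → V → ℝ`. -/
def circulationSubmodule (V : Type*) [Fintype V] (G : SimpleGraph V) :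
    Submodule ℝ (V → V → ℝ) where
  carrier := {f | (∀ x y, f x y = -(f y x)) ∧ (∀ x y, ¬ G.Adj x y → f x y = 0) ∧
      (∀ x, ∑ y, f x y = 0)}
  add_mem' := by
    rintro a b ⟨ha1, ha2, ha3⟩ ⟨hb1, hb2, hb3⟩
    refine ⟨fun x y => ?_, fun x y h => ?_, fun x => ?_⟩
    · simp only [Pi.add_apply]
      rw [ha1 x y, hb1 x y]; ring
    · simp only [Pi.add_apply]
      rw [ha2 x y h, hb2 x y h]; ring
    · simp only [Pi.add_apply]
      rw [Finset.sum_add_distrib, ha3 x, hb3 x]; ring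
  zero_mem' := ⟨fun x y => by simp, fun x y _ => rfl, fun x => by simp⟩
  smul_mem' := by
    rintro c a ⟨ha1, ha2, ha3⟩
    refine ⟨fun x y => ?_, fun x y h => ?_, fun x => ?_⟩
    · simp only [Pi.smul_apply, smul_eq_mul]
      rw [ha1 x y]; ring
    · simp only [Pi.smul_apply, smul_eq_mul]
      rw [ha2 x y h]; ring
    · simp only [Pi.smul_apply, smul_eq_mul]
      rw [← Finset.mul_sum, ha3 x]; ring

open Matrix

namespace SimpleGraph

lemma rank_lapMatrix_add_card_connectedComponent {V : Type*} [Fintype V] [DecidableEq V]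
    (G : SimpleGraph V) [DecidableRel G.Adj] :
    (G.lapMatrix ℝ).rank + Nat.card G.ConnectedComponent = Fintype.card V := by
  rw [Nat.card_eq_fintype_card, card_connectedComponent_eq_finrank_ker_toLin'_lapMatrix, rank,
    ← toLin'_apply', LinearMap.finrank_range_add_finrank_ker, Module.finrank_fintype_fun_eq_card]

variable {V : Type*} [LinearOrder V] (G : SimpleGraph V)

abbrev OrientedEdge := {e : V × V // G.Adj e.1 e.2 ∧ e.1 < e.2}

def orientedIncMatrix : Matrix V G.OrientedEdge ℝ :=
  of fun x e => (if x = e.1.1 then 1 else 0) - (if x = e.1.2 then 1 else 0)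

def edgeChain (e : G.OrientedEdge) : V → V → ℝ := fun x y =>
  (if x = e.1.1 ∧ y = e.1.2 then 1 else 0) - (if x = e.1.2 ∧ y = e.1.1 then 1 else 0)

noncomputable def chainOfEdges [Fintype V] [DecidableRel G.Adj] :
    (G.OrientedEdge → ℝ) →ₗ[ℝ] (V → V → ℝ) :=
  Fintype.linearCombination ℝ G.edgeChain

variable {G}

lemma card_orientedEdge : Nat.card G.OrientedEdge = Nat.card G.edgeSet := by
  refine Nat.card_eq_of_bijective (fun e => ⟨s(e.1.1, e.1.2), e.2.1⟩) ⟨?_, ?_⟩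
  · rintro ⟨⟨a, b⟩, _, hab⟩ ⟨⟨c, d⟩, _, hcd⟩ h
    obtain ⟨rfl, rfl⟩ | ⟨rfl, rfl⟩ := Sym2.eq_iff.mp (congrArg Subtype.val h)
    · rfl
    · exact absurd (hab.trans hcd) (lt_irrefl a)
  · rintro ⟨e, he⟩
    induction e using Sym2.ind with | _ a b
    rcases (G.mem_edgeSet.mp he).ne.lt_or_gt with hab | hba
    · exact ⟨⟨(a, b), G.mem_edgeSet.mp he, hab⟩, rfl⟩
    · exact ⟨⟨(b, a), G.adj_symm (G.mem_edgeSet.mp he), hba⟩, Subtype.ext Sym2.eq_swap⟩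

lemma eq_zero_of_forall_orientedEdge {f : V → V → ℝ} (hanti : ∀ x y, f x y = -f y x)
    (hsupp : ∀ x y, ¬G.Adj x y → f x y = 0)
    (hzero : ∀ e : G.OrientedEdge, f e.1.1 e.1.2 = 0) :
    f = 0 := by
  ext x y
  by_cases hxy : G.Adj x y
  · rcases hxy.ne.lt_or_gt with hlt | hgt
    · exact hzero ⟨(x, y), hxy, hlt⟩
    · rw [hanti, hzero ⟨(y, x), hxy.symm, hgt⟩, neg_zero, Pi.zero_apply, Pi.zero_apply]
  · exact hsupp x y hxy

variable [Fintype V]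

lemma sum_edgeChain_apply (e : G.OrientedEdge) (x : V) :
    ∑ y, edgeChain G e x y = orientedIncMatrix G x e := by
  simp [edgeChain, orientedIncMatrix, Finset.sum_sub_distrib, ite_and]

variable [DecidableRel G.Adj]

lemma chainOfEdges_apply (g : G.OrientedEdge → ℝ) (x y : V) :
    chainOfEdges G g x y = ∑ e, g e * edgeChain G e x y := by
  simp [chainOfEdges, Fintype.linearCombination_apply]

lemma chainOfEdges_antisymm (g : G.OrientedEdge → ℝ) (x y : V) :
    chainOfEdges G g x y = -chainOfEdges G g y x := by
  simp only [chainOfEdges_apply, ← Finset.sum_neg_distrib]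
  refine Finset.sum_congr rfl fun e _ => ?_
  simp only [edgeChain, and_comm]
  ring

lemma chainOfEdges_of_not_adj (g : G.OrientedEdge → ℝ) {x y : V} (h : ¬G.Adj x y) :
    chainOfEdges G g x y = 0 := by
  rw [chainOfEdges_apply]
  refine Finset.sum_eq_zero fun e _ => ?_
  have hxy : ¬(x = e.1.1 ∧ y = e.1.2) := by rintro ⟨rfl, rfl⟩; exact h e.2.1
  have hyx : ¬(x = e.1.2 ∧ y = e.1.1) := by rintro ⟨rfl, rfl⟩; exact h e.2.1.symm
  simp [edgeChain, hxy, hyx]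

lemma chainOfEdges_apply_orientedEdge (g : G.OrientedEdge → ℝ) (e : G.OrientedEdge) :
    chainOfEdges G g e.1.1 e.1.2 = g e := by
  rw [chainOfEdges_apply, Fintype.sum_eq_single e]
  · have : ¬(e.1.1 = e.1.2 ∧ e.1.2 = e.1.1) := fun h => e.2.2.ne h.1
    simp [edgeChain, this]
  · intro e' he'
    have h1 : ¬(e.1.1 = e'.1.1 ∧ e.1.2 = e'.1.2) := fun h =>
      he' (Subtype.ext (Prod.ext h.1 h.2)).symm
    have h2 : ¬(e.1.1 = e'.1.2 ∧ e.1.2 = e'.1.1) := fun h =>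
      (e.2.2.trans (h.2 ▸ h.1 ▸ e'.2.2)).false
    simp [edgeChain, h1, h2]

lemma sum_chainOfEdges_apply (g : G.OrientedEdge → ℝ) (x : V) :
    ∑ y, chainOfEdges G g x y = (orientedIncMatrix G *ᵥ g) x := by
  simp only [chainOfEdges_apply, mulVec, dotProduct]
  rw [Finset.sum_comm]
  simp only [← Finset.mul_sum, sum_edgeChain_apply, mul_comm]

lemma chainOfEdges_restrict {f : V → V → ℝ} (hanti : ∀ x y, f x y = -f y x)
    (hsupp : ∀ x y, ¬G.Adj x y → f x y = 0) :
    chainOfEdges G (fun e => f e.1.1 e.1.2) = f := by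
  refine sub_eq_zero.mp (eq_zero_of_forall_orientedEdge (G := G) (fun x y => ?_) (fun x y h => ?_)
    fun e => ?_)
  · simp only [Pi.sub_apply]
    rw [chainOfEdges_antisymm, hanti x y]
    ring
  · simp [chainOfEdges_of_not_adj _ h, hsupp x y h]
  · simp [chainOfEdges_apply_orientedEdge]

lemma chainOfEdges_injective : Function.Injective (chainOfEdges G) := fun g h hgh =>
  funext fun e => by
    rw [← chainOfEdges_apply_orientedEdge g e, hgh, chainOfEdges_apply_orientedEdge]

lemma circulationSubmodule_eq_map_ker :
    circulationSubmodule V G =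
      (LinearMap.ker (orientedIncMatrix G).mulVecLin).map (chainOfEdges G) := by
  ext f
  constructor
  · rintro ⟨hanti, hsupp, hdiv⟩
    refine ⟨fun e => f e.1.1 e.1.2, ?_, chainOfEdges_restrict hanti hsupp⟩
    ext x
    simp [← sum_chainOfEdges_apply, chainOfEdges_restrict hanti hsupp, hdiv]
  · rintro ⟨g, hg, rfl⟩
    refine ⟨chainOfEdges_antisymm g, fun x y => chainOfEdges_of_not_adj g, fun x => ?_⟩
    rw [sum_chainOfEdges_apply]
    exact congrFun (LinearMap.mem_ker.mp hg) x

lemma finrank_circulationSubmodule_add_rank :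
    Module.finrank ℝ (circulationSubmodule V G) + (orientedIncMatrix G).rank =
      Nat.card G.OrientedEdge := by
  rw [circulationSubmodule_eq_map_ker,
    (Submodule.equivMapOfInjective _ chainOfEdges_injective _).finrank_eq.symm, add_comm,
    rank, LinearMap.finrank_range_add_finrank_ker, Module.finrank_fintype_fun_eq_card,
    Nat.card_eq_fintype_card]

lemma chainOfEdges_transpose_mulVec (φ : V → ℝ) :
    chainOfEdges G ((orientedIncMatrix G)ᵀ *ᵥ φ) =
      fun x y => if G.Adj x y then φ x - φ y else 0 := by
  have hgrad : (orientedIncMatrix G)ᵀ *ᵥ φ = fun e => φ e.1.1 - φ e.1.2 := by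
    ext e
    simp [mulVec, dotProduct, orientedIncMatrix, sub_mul, Finset.sum_sub_distrib]
  rw [hgrad]
  convert chainOfEdges_restrict (G := G) (f := fun x y => if G.Adj x y then φ x - φ y else 0) _ _
    using 3 with e
  · simp [e.2.1]
  · intro x y
    by_cases h : G.Adj x y
    · simp [h, h.symm]
    · simp [h, mt G.adj_symm h]
  · intro x y h
    simp [h]

lemma orientedIncMatrix_mul_transpose :
    orientedIncMatrix G * (orientedIncMatrix G)ᵀ = G.lapMatrix ℝ := by
  refine ext_iff_mulVec.mpr fun φ => funext fun x => ?_
  rw [← mulVec_mulVec, ← sum_chainOfEdges_apply, chainOfEdges_transpose_mulVec,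
    lapMatrix_mulVec_apply, ← Finset.sum_filter, ← neighborFinset_eq_filter,
    Finset.sum_sub_distrib, Finset.sum_const, card_neighborFinset_eq_degree, nsmul_eq_mul]

lemma rank_orientedIncMatrix_add_card_connectedComponent :
    (orientedIncMatrix G).rank + Nat.card G.ConnectedComponent = Fintype.card V := by
  rw [← rank_self_mul_transpose, orientedIncMatrix_mul_transpose,
    rank_lapMatrix_add_card_connectedComponent]

end SimpleGraph

/-- The dimension of the space of circulations equals `M = B - N + R`, where `B` is the
number of edges, `N` the number of vertices and `R` the number of connected components. -/
theorem finrank_circulationSubmodule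
    (V : Type*) [Fintype V] [DecidableEq V]
    (G : SimpleGraph V) [DecidableRel G.Adj] :
    (Module.finrank ℝ (circulationSubmodule V G) : ℤ) =
      (G.edgeFinset.card : ℤ) - (Fintype.card V : ℤ) + (Nat.card G.ConnectedComponent : ℤ) := by
  let _ : LinearOrder V := LinearOrder.lift' _ (Fintype.equivFin V).injective
  have hcirc := SimpleGraph.finrank_circulationSubmodule_add_rank (G := G)
  have hrank := SimpleGraph.rank_orientedIncMatrix_add_card_connectedComponent (G := G)
  have hedges : G.edgeFinset.card = Nat.card G.OrientedEdge := by
    rw [SimpleGraph.edgeFinset_card, ← Nat.card_eq_fintype_card, SimpleGraph.card_orientedEdge]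
  omega
end
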